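/- Let r = (9 − √17)/8, let β > 27(9 + √17)/128 (note 27(9+√17)/128 = 27/(16r)), and let s ∈ ℝ with 0 < s < (51√17 − 107)/256 (note (51√17 − 107)/256 = 2r²(r−1)(r−2) = max_{ρ ∈ (0,1)} 2ρ²(ρ−1)(ρ−2)). Define g : [0,∞) × [0,∞) → ℝ by g(z, w) = 2z² − 6z^{3/2} + (4 + 2β)z − 2β z^{1/2} w^{1/2} − s. Then there exists r̄ > r such that: (i) the function z ↦ g(z, r̄²) is continuous and convex on [0,∞); (ii) for every z ≥ 0, inf_{0 ≤ w ≤ r̄²} g(z, w) = g(z, r̄²); and (iii) g(z, r̄²) > 0 for all z ≥ r². (This is the analytic core of the verification that the granular media equation with double-well potential V'(x) = x(x−1)(x+1), quadratic interaction of strength β, and diffusion coefficient with σ(x)² bounded by s is locally dissipative at the points ±1 with configuration (r, r̄, g).) -/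
import Mathlib


/-- The function `g(z,w) = 2z² − 6z^{3/2} + (4 + 2β)z − 2β √z √w − s` appearing in the
verification of local dissipativity for the double-well granular media equation. -/
noncomputable def doubleWellG (β s z w : ℝ) : ℝ :=
  2 * z ^ 2 - 6 * z ^ ((3:ℝ)/2) + (4 + 2 * β) * z - 2 * β * Real.sqrt z * Real.sqrt w - s

private lemma polyAux (r t β δ : ℝ) (hroot : 4*r^2 = 9*r - 4)
    (hr1 : (0.609:ℝ) ≤ r) (hr2 : r ≤ 0.61) (ht : r ≤ t)
    (hb : (2.76:ℝ) ≤ β) (hd0 : 0 < δ) (hdM : δ ≤ 0.405) :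
    0 < 2*t^4 - 6*t^3 + 4*t^2 - (2*r^4 - 6*r^3 + 4*r^2)
      + 2*β*(t^2 - t*r) + (δ - δ*t/4) := by
  have htr : 0 ≤ t - r := by linarith
  have ht0 : 0 < t := by linarith
  have hQ : 0 ≤ 2*t^2 + (4*r-6)*t + 6*r^2 - 12*r + 7.52 := by
    nlinarith [sq_nonneg (4*t + 4*r - 6), hroot, hr1]
  have hD : 0 ≤ (t-r)*(2*t^2 + (4*r-6)*t + 6*r^2 - 12*r + 4) + 3.52*t - 1 := by
    nlinarith [mul_nonneg htr hQ, hr1]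
  have hbt : 0 ≤ (2*β - 5.52)*(t*(t-r)) :=
    mul_nonneg (by linarith) (mul_nonneg ht0.le htr)
  have hPr : 2*t^4 - 6*t^3 + 4*t^2 - (2*r^4 - 6*r^3 + 4*r^2)
      = (t-r)^2*(2*t^2 + (4*r-6)*t + 6*r^2 - 12*r + 4) := by
    have h0 : 4*r^2 - 9*r + 4 = 0 := by linarith
    linear_combination (t - r) * 2 * r * h0
  have hfin : 0 < (t - r)*(1 + 2*t) + (δ - δ*t/4) := by
    rcases le_or_gt t 4 with h4 | h4
    · rcases eq_or_lt_of_le ht with heq | hlt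
      · nlinarith [mul_pos hd0 (show (0:ℝ) < 4 - t by linarith), heq]
      · nlinarith [mul_pos (sub_pos.2 hlt) (show (0:ℝ) < 1 + 2*t by linarith),
          mul_nonneg hd0.le (show (0:ℝ) ≤ 4 - t by linarith)]
    · have hdt : δ*(t-4) ≤ 0.405*(t-4) :=
        mul_le_mul_of_nonneg_right hdM (by linarith)
      nlinarith [hdt, mul_pos (show (0:ℝ) < t - 4 by linarith) ht0]
  nlinarith [mul_nonneg htr hD, hbt, hfin, hPr]

private lemma convexAux (b c s : ℝ) (hc : 27/8 ≤ c) :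
    ConvexOn ℝ (Set.Ici (0:ℝ))
      (fun z => 2*z^2 - 6*z^((3:ℝ)/2) + b*z - c*Real.sqrt z - s) := by
  set f : ℝ → ℝ := fun z => 2*z^2 - 6*z^((3:ℝ)/2) + b*z - c*Real.sqrt z - s with hf
  set f1 : ℝ → ℝ := fun x => 4*x - 9*Real.sqrt x + b - c*(2*Real.sqrt x)⁻¹ with hf1
  set f2 : ℝ → ℝ := fun x => 4 - 9*(2*Real.sqrt x)⁻¹ + c*(4*(x*Real.sqrt x))⁻¹ with hf2
  have hd : ∀ x ∈ Set.Ioi (0:ℝ), HasDerivAt f (f1 x) x := by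
    intro x hx
    have hx0 : (0:ℝ) < x := hx
    have hsx : (0:ℝ) < Real.sqrt x := Real.sqrt_pos.2 hx0
    have h32 : HasDerivAt (fun z : ℝ => z^((3:ℝ)/2)) ((3/2) * Real.sqrt x) x := by
      have h := Real.hasDerivAt_rpow_const (x := x) (p := (3:ℝ)/2) (Or.inl hx0.ne')
      convert h using 1
      rw [Real.sqrt_eq_rpow]; norm_num
    have hsq : HasDerivAt Real.sqrt (1/(2*Real.sqrt x)) x := Real.hasDerivAt_sqrt hx0.ne'
    have h2 : HasDerivAt (fun z : ℝ => z^2) (2*x) x := by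
      simpa using hasDerivAt_pow 2 x
    have h3 : HasDerivAt f (2*(2*x) - 6*((3/2)*Real.sqrt x) + b*1 - c*(1/(2*Real.sqrt x))) x :=
      ((((h2.const_mul 2).sub (h32.const_mul 6)).add
        ((hasDerivAt_id x).const_mul b)).sub (hsq.const_mul c)).sub_const s
    convert h3 using 1
    rw [hf1]
    field_simp
    ring
  have hd1 : ∀ x ∈ Set.Ioi (0:ℝ), HasDerivAt f1 (f2 x) x := by
    intro x hx
    have hx0 : (0:ℝ) < x := hx
    have hsx : (0:ℝ) < Real.sqrt x := Real.sqrt_pos.2 hx0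
    have hx2 : Real.sqrt x ^ 2 = x := Real.sq_sqrt hx0.le
    have hsq : HasDerivAt Real.sqrt (1/(2*Real.sqrt x)) x := Real.hasDerivAt_sqrt hx0.ne'
    have hu2 : HasDerivAt (fun y : ℝ => 2*Real.sqrt y) (2*(1/(2*Real.sqrt x))) x :=
      hsq.const_mul 2
    have hu0 : 2*Real.sqrt x ≠ 0 := by positivity
    have hinv : HasDerivAt (fun y : ℝ => c*(2*Real.sqrt y)⁻¹)
        (c*(-(2*(1/(2*Real.sqrt x))) / (2*Real.sqrt x)^2)) x := (hu2.inv hu0).const_mul c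
    have h3 : HasDerivAt f1 (4*1 - 9*(1/(2*Real.sqrt x))
        - c*(-(2*(1/(2*Real.sqrt x))) / (2*Real.sqrt x)^2)) x :=
      (((hasDerivAt_id x).const_mul 4).sub (hsq.const_mul 9)).add_const b |>.sub hinv
    convert h3 using 1
    rw [hf2, show (2*Real.sqrt x)^2 = 4*x by rw [mul_pow, hx2]; norm_num]
    field_simp
    ring
  have hderiv : ∀ x ∈ Set.Ioi (0:ℝ), deriv f x = f1 x := fun x hx => (hd x hx).deriv
  have hIoi : ∀ x ∈ Set.Ioi (0:ℝ), deriv f =ᶠ[nhds x] f1 := by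
    intro x hx
    exact Filter.eventuallyEq_of_mem (Ioi_mem_nhds hx) hderiv
  apply convexOn_of_deriv2_nonneg (convex_Ici 0)
  · have h1 : Continuous fun z : ℝ => z ^ ((3:ℝ)/2) := Real.continuous_rpow_const (by norm_num)
    exact ((((continuous_const.mul (continuous_pow 2)).sub (continuous_const.mul h1)).add
      (continuous_const.mul continuous_id)).sub
      (continuous_const.mul Real.continuous_sqrt)).sub continuous_const |>.continuousOn
  · rw [interior_Ici]
    exact fun x hx => (hd x hx).differentiableAt.differentiableWithinAt
  · rw [interior_Ici]
    exact fun x hx => ((hd1 x hx).differentiableAt.congr_of_eventuallyEq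
      (hIoi x hx)).differentiableWithinAt
  · rw [interior_Ici]
    intro x hx
    have hx0 : (0:ℝ) < x := hx
    have hsx : (0:ℝ) < Real.sqrt x := Real.sqrt_pos.2 hx0
    have h2 : deriv^[2] f x = f2 x := by
      have h4 : deriv (deriv f) x = deriv f1 x := (hIoi x hx).deriv_eq
      simp only [Function.iterate_succ, Function.iterate_zero, Function.comp_apply, id]
      rw [h4, (hd1 x hx).deriv]
    rw [h2]
    obtain ⟨u, hu0, rfl⟩ : ∃ u : ℝ, 0 < u ∧ x = u^2 :=
      ⟨Real.sqrt x, hsx, (Real.sq_sqrt hx0.le).symm⟩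
    rw [hf2]
    simp only [Real.sqrt_sq hu0.le]
    have key : 4 - 9*(2*u)⁻¹ + c*(4*(u^2*u))⁻¹ = (4*u^3 - (9/2)*u^2 + c/4)/u^3 := by
      field_simp
    rw [key]
    apply div_nonneg _ (by positivity)
    nlinarith [mul_nonneg (show (0:ℝ) ≤ 4*u + 3/2 by positivity) (sq_nonneg (u - 3/4)), hc]

/-- Analytic core of the local dissipativity of the double-well granular media equation
at the points `±1`: with `r = (9 − √17)/8`, for `β > 27(9 + √17)/128` and
`0 < s < (51√17 − 107)/256`, there exists `r̄ > r` such that `g(·, r̄²)` is continuous and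
convex on `[0,∞)`, `g(z, ·)` attains its infimum over `[0, r̄²]` at `r̄²`, and
`g(z, r̄²) > 0` for all `z ≥ r²`. -/
theorem double_well_locally_dissipative_configuration
    (β s : ℝ)
    (hβ : 27 * (9 + Real.sqrt 17) / 128 < β)
    (hs_pos : 0 < s) (hs : s < (51 * Real.sqrt 17 - 107) / 256) :
    ∃ rbar : ℝ, (9 - Real.sqrt 17) / 8 < rbar ∧
      -- (i) `z ↦ g(z, r̄²)` is continuous and convex on `[0,∞)`:
      (ContinuousOn (fun z => doubleWellG β s z (rbar ^ 2)) (Set.Ici 0) ∧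
        ConvexOn ℝ (Set.Ici (0:ℝ)) (fun z => doubleWellG β s z (rbar ^ 2))) ∧
      -- (ii) `inf_{0 ≤ w ≤ r̄²} g(z, w) = g(z, r̄²)` for every `z ≥ 0`:
      (∀ z, 0 ≤ z → ∀ w, 0 ≤ w → w ≤ rbar ^ 2 →
        doubleWellG β s z (rbar ^ 2) ≤ doubleWellG β s z w) ∧
      -- (iii) `g(z, r̄²) > 0` for all `z ≥ r²`:
      (∀ z, ((9 - Real.sqrt 17) / 8) ^ 2 ≤ z → 0 < doubleWellG β s z (rbar ^ 2)) := by
  have hk2 : Real.sqrt 17 ^ 2 = 17 := Real.sq_sqrt (by norm_num)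
  have hk0 : (0:ℝ) ≤ Real.sqrt 17 := Real.sqrt_nonneg 17
  have hklb : (4.123:ℝ) < Real.sqrt 17 := by nlinarith
  have hkub : Real.sqrt 17 < 4.124 := by nlinarith
  set k : ℝ := Real.sqrt 17 with hkdef
  set r : ℝ := (9 - k)/8 with hrdef
  have hr_root : 4*r^2 = 9*r - 4 := by
    rw [hrdef]; linear_combination hk2/16
  have hr1 : (0.609:ℝ) ≤ r := by rw [hrdef]; linarith
  have hr2 : r ≤ 0.61 := by rw [hrdef]; linarith
  have hrpos : (0:ℝ) < r := by linarith
  have hβ2 : (2.76:ℝ) < β := by nlinarith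
  have hβpos : (0:ℝ) < β := by linarith
  set M : ℝ := (51*k - 107)/256 with hMdef
  have hMr : M = 2*r^4 - 6*r^3 + 4*r^2 := by
    rw [hMdef, hrdef]; linear_combination (-(108 - 12*k + (k^2-17))/2048) * hk2 + (27/512) * hk2
  have hM1 : M ≤ 0.405 := by rw [hMdef]; linarith
  set δ : ℝ := M - s with hδdef
  have hδ0 : (0:ℝ) < δ := sub_pos.2 hs
  have hδ1 : δ ≤ 0.405 := by rw [hδdef]; linarith
  set rb : ℝ := r + δ/(8*β) with hrbdef
  have hrb : r < rb := by
    have h : 0 < δ/(8*β) := by positivity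
    rw [hrbdef]; linarith
  have hrb0 : (0:ℝ) < rb := lt_trans hrpos hrb
  have hsq : Real.sqrt (rb^2) = rb := Real.sqrt_sq hrb0.le
  have hβr : 27/16 < β * r := by
    have h1 := mul_lt_mul_of_pos_right hβ hrpos
    have h2 : 27*(9+k)/128 * r = 27/16 := by
      rw [hrdef]; linear_combination (-27/1024)*hk2
    linarith
  clear_value k r M δ rb
  have hc : 27/8 ≤ 2*β*rb := by
    nlinarith [hβr, mul_nonneg hβpos.le (sub_nonneg.2 hrb.le)]
  have hfun : (fun z => doubleWellG β s z (rb^2))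
      = fun z => 2*z^2 - 6*z^((3:ℝ)/2) + (4+2*β)*z - (2*β*rb)*Real.sqrt z - s := by
    funext z
    simp only [doubleWellG, hsq]
    ring
  have hcont : Continuous
      (fun z : ℝ => 2*z^2 - 6*z^((3:ℝ)/2) + (4+2*β)*z - (2*β*rb)*Real.sqrt z - s) := by
    have h1 : Continuous fun z : ℝ => z ^ ((3:ℝ)/2) := Real.continuous_rpow_const (by norm_num)
    exact ((((continuous_const.mul (continuous_pow 2)).sub (continuous_const.mul h1)).add
      (continuous_const.mul continuous_id)).sub
      (continuous_const.mul Real.continuous_sqrt)).sub continuous_const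
  refine ⟨rb, hrb, ⟨?_, ?_⟩, ?_, ?_⟩
  · rw [hfun]; exact hcont.continuousOn
  · rw [hfun]; exact convexAux (4+2*β) (2*β*rb) s hc
  · intro z hz w hw hwle
    simp only [doubleWellG, hsq]
    have h1 : Real.sqrt w ≤ rb := by rw [← hsq]; exact Real.sqrt_le_sqrt hwle
    have h2 : (0:ℝ) ≤ 2*β*Real.sqrt z := by positivity
    have h3 := mul_le_mul_of_nonneg_left h1 h2
    linarith [h3]
  · intro z hz
    have hz0 : (0:ℝ) ≤ z := le_trans (by positivity) hz
    obtain ⟨t, htr, rfl⟩ : ∃ t : ℝ, r ≤ t ∧ z = t^2 := by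
      refine ⟨Real.sqrt z, ?_, (Real.sq_sqrt hz0).symm⟩
      exact (Real.le_sqrt hrpos.le hz0).2 hz
    have ht0 : (0:ℝ) ≤ t := le_trans hrpos.le htr
    simp only [doubleWellG, hsq, Real.sqrt_sq ht0]
    have h32 : ((t^2 : ℝ))^((3:ℝ)/2) = t^3 := by
      rw [← Real.rpow_natCast t 2, ← Real.rpow_mul ht0,
        show ((2:ℕ):ℝ) * ((3:ℝ)/2) = ((3:ℕ):ℝ) by norm_num, Real.rpow_natCast]
    rw [h32]
    have hsδ : s = (2*r^4 - 6*r^3 + 4*r^2) - δ := by rw [hδdef, hMr]; ring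
    have hrb' : 2*β*t*rb = 2*β*(t*r) + δ*t/4 := by
      rw [hrbdef]; field_simp; ring
    have hkey := polyAux r t β δ hr_root hr1 hr2 htr hβ2.le hδ0 hδ1
    rw [hsδ, hrb']
    ring_nf at hkey ⊢
    linarith [hkey]
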